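/- Let A be a unital commutative complex Banach *-algebra. If A is Jordan weakly amenable, then A is ternary weakly amenable. -/
import Mathlib


/-!
STATEMENT 11: Let `A` be a unital commutative complex Banach `*`-algebra.
If `A` is Jordan weakly amenable (every continuous Jordan derivation `A → A*` is an
inner Jordan derivation), then `A` is ternary weakly amenable (every continuous
conjugate-linear ternary derivation `A → A*` is an inner ternary derivation).
-/

open scoped ComplexConjugate

noncomputable section

variable {A : Type*} [NormedCommRing A] [NormedAlgebra ℂ A] [CompleteSpace A]
  [StarRing A] [StarModule ℂ A] [NormedStarGroup A]

/-- The triple product `{a,b,c} = (a b* c + c b* a)/2`. -/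
def jtrip (a b c : A) : A := (2 : ℂ)⁻¹ • (a * star b * c + c * star b * a)

/-- The Jordan product `a∘b = (ab+ba)/2`. -/
def jord (a b : A) : A := (2 : ℂ)⁻¹ • (a * b + b * a)

/-- `δ : A → A*` (continuous, conjugate-linear) is a ternary derivation, written out
pointwise on `A*`, where `{a,b,φ}(x) = {φ,b,a}(x) := φ({b,a,x})` and
`{a,φ,b}(x) := conj (φ({a,x,b}))`. -/
def IsTernaryDer (δ : A →L⋆[ℂ] (A →L[ℂ] ℂ)) : Prop :=
  ∀ a b c x : A, δ (jtrip a b c) x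
    = δ a (jtrip b c x) + conj (δ b (jtrip a x c)) + δ c (jtrip b a x)

/-- `δ : A → A*` is an inner ternary derivation: a finite sum of the maps
`a ↦ {b,φ,a} − {φ,b,a}`. -/
def IsInnerTernaryDer (δ : A →L⋆[ℂ] (A →L[ℂ] ℂ)) : Prop :=
  ∃ (n : ℕ) (b : Fin n → A) (φ : Fin n → (A →L[ℂ] ℂ)),
    ∀ a x : A, δ a x
      = ∑ i, (conj (φ i (jtrip (b i) x a)) - φ i (jtrip (b i) a x))

/-- `D : A → A*` (continuous linear) is a Jordan derivation, pointwise. -/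
def IsJordanDer (D : A →L[ℂ] (A →L[ℂ] ℂ)) : Prop :=
  ∀ a b x : A, D (jord a b) x = D a (jord b x) + D b (jord a x)

/-- `D : A → A*` is an inner Jordan derivation: a finite sum of the maps
`a ↦ (x₀∘a)∘b − (b∘a)∘x₀`. -/
def IsInnerJordanDer (D : A →L[ℂ] (A →L[ℂ] ℂ)) : Prop :=
  ∃ (n : ℕ) (x₀ : Fin n → (A →L[ℂ] ℂ)) (b : Fin n → A),
    ∀ a y : A, D a y
      = ∑ i, (x₀ i (jord a (jord (b i) y)) - x₀ i (jord (jord (b i) a) y))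

/-- A unital commutative complex Banach `*`-algebra which is Jordan weakly amenable
is ternary weakly amenable. -/
theorem jordan_weakly_amenable_implies_ternary_weakly_amenable
    (hwa : ∀ D : A →L[ℂ] (A →L[ℂ] ℂ), IsJordanDer D → IsInnerJordanDer D) :
    ∀ δ : A →L⋆[ℂ] (A →L[ℂ] ℂ), IsTernaryDer δ → IsInnerTernaryDer δ := by
  intro δ hδ
  have hjtrip : ∀ a b c : A, jtrip a b c = a * star b * c := by
    intro a b c
    rw [jtrip, show c * star b * a = a * star b * c by ring, ← two_smul ℂ, smul_smul]
    norm_num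
  have hjord : ∀ a b : A, jord a b = a * b := by
    intro a b
    rw [jord, show b * a = a * b by ring, ← two_smul ℂ, smul_smul]
    norm_num
  set φ₀ : A →L[ℂ] ℂ := δ 1 with hφ₀
  have R1 : ∀ x : A, conj (φ₀ (star x)) = - φ₀ x := by
    intro x
    have h := hδ 1 1 1 x
    simp only [hjtrip, star_one, one_mul, mul_one] at h
    rw [← hφ₀] at h
    linear_combination -h
  set D : A →L[ℂ] (A →L[ℂ] ℂ) :=
    δ.comp (starL ℂ : A ≃L⋆[ℂ] A).toContinuousLinearMap -
      (ContinuousLinearMap.compL ℂ A A ℂ φ₀).comp (ContinuousLinearMap.mul ℂ A) with hD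
  have hDapp : ∀ a x : A, D a x = δ (star a) x - φ₀ (a * x) := by
    intro a x
    simp [hD, ContinuousLinearMap.mul_apply']
  have hDder : IsJordanDer D := by
    intro a b x
    have h := hδ (star a) 1 (star b) x
    simp only [hjtrip, star_one, one_mul, mul_one, star_star] at h
    have hst : star a * star x * star b = star (a * b * x) := by
      rw [star_mul', star_mul']; ring
    rw [hst, ← hφ₀, R1 (a * b * x)] at h
    simp only [hjord, hDapp]
    rw [show star (a * b) = star a * star b from star_mul' a b,
      show a * (b * x) = a * b * x by ring, show b * (a * x) = a * b * x by ring]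
    linear_combination h
  obtain ⟨n, x₀, b, hinner⟩ := hwa D hDder
  have hDzero : ∀ a x : A, D a x = 0 := by
    intro a x
    rw [hinner a x]
    apply Finset.sum_eq_zero
    intro i _
    simp only [hjord]
    rw [show a * (b i * x) = b i * a * x by ring, sub_self]
  have key : ∀ a x : A, δ a x = φ₀ (star a * x) := by
    intro a x
    have h := hDzero (star a) x
    rw [hDapp, star_star, sub_eq_zero] at h
    exact h
  refine ⟨1, fun _ => 1, fun _ => (-(2 : ℂ)⁻¹) • φ₀, fun a x => ?_⟩
  simp only [Fin.sum_univ_one, hjtrip, star_one, one_mul, mul_one,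
    ContinuousLinearMap.smul_apply, smul_eq_mul]
  rw [key a x]
  have h1 : conj ((-(2 : ℂ)⁻¹) * φ₀ (star x * a)) = (-(2 : ℂ)⁻¹) * (- φ₀ (star a * x)) := by
    rw [map_mul, show star x * a = star (star a * x) by rw [star_mul', star_star]; ring,
      R1, show conj (-(2 : ℂ)⁻¹) = -(2 : ℂ)⁻¹ by simp [Complex.ext_iff]]
  rw [h1]
  ring
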